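/- In a midsection cell complex, two different vertices cannot be connected by both a red path and a blue path. -/
import Mathlib

/-- The midsection of a causal disc-slice, recorded together with the data it
inherits from the slice: each vertex `a` corresponds to a unique two-coloured
edge `e_a` of the slice, with a red endpoint `rEnd a` and a blue endpoint
`bEnd a`.  A blue (red) edge of the midsection forces the red (blue) endpoints
of the corresponding slice edges to coincide, and a two-coloured edge of the
slice is determined by its endpoints. -/
structure Midsection where
  /-- vertices of the midsection -/
  V : Type
  /-- red edges of the midsection -/
  red : V → V → Prop
  /-- blue edges of the midsection -/
  blue : V → V → Prop
  red_symm : ∀ {a b}, red a b → red b a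
  blue_symm : ∀ {a b}, blue a b → blue b a
  /-- red vertices of the slice -/
  RV : Type
  /-- blue vertices of the slice -/
  BV : Type
  /-- red endpoint of the two-coloured slice edge `e_a` -/
  rEnd : V → RV
  /-- blue endpoint of the two-coloured slice edge `e_a` -/
  bEnd : V → BV
  /-- a blue edge of the midsection forces the red endpoints to coincide -/
  blue_step_rEnd : ∀ {a b}, blue a b → rEnd a = rEnd b
  /-- a red edge of the midsection forces the blue endpoints to coincide -/
  red_step_bEnd : ∀ {a b}, red a b → bEnd a = bEnd b
  /-- a two-coloured edge of the slice is determined by its endpoints -/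
  edge_det : ∀ {a b}, rEnd a = rEnd b → bEnd a = bEnd b → a = b

/-- Two different vertices of a midsection cannot be connected by both a red
path and a blue path. -/
theorem stmt0 (S : Midsection) (a b : S.V) (hab : a ≠ b) :
    ¬ (Relation.ReflTransGen S.red a b ∧ Relation.ReflTransGen S.blue a b) := by
  rintro ⟨hr, hb⟩
  have h1 : S.bEnd a = S.bEnd b := by
    clear hab hb
    induction hr with
    | refl => rfl
    | tail _ h ih => exact ih.trans (S.red_step_bEnd h)
  have h2 : S.rEnd a = S.rEnd b := by
    clear hab hr h1
    induction hb with
    | refl => rfl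
    | tail _ h ih => exact ih.trans (S.blue_step_rEnd h)
  exact hab (S.edge_det h2 h1)
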